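/- arXiv:1902.00947 — 2 statements merged into one kernel-verified Lean document; each statement's English description precedes it below -/
import Mathlib

section
/- Let f be L-smooth convex and h closed proper convex on ℝ^d, F = f + h with minimizer x⋆, and x_{k+1} = prox_{h/L}(x_k - (1/L) f'(x_k)). Let s_{k+1} ∈ ∂h(x_{k+1}) be the subgradient implicitly defined by the prox step, and set F'(x_{k+1}) = f'(x_{k+1}) + s_{k+1}. Then for any b_k, d_k ≥ 0 and any F'(x_k) ∈ ∂F(x_k), with d_{k+1} = d_k + 2L and b_{k+1} = b_k + 1 + d_k/L, the potential φ_k = d_k (F(x_k) - F(x⋆)) + b_k ‖F'(x_k)‖² + L² ‖x_k - x⋆‖² satisfies φ_{k+1} ≤ φ_k. -/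
/-!
Let `G = L (x_k - x_{k+1}) = f'(x_k) + s_{k+1}` be the gradient mapping of the step. One
prox-gradient step satisfies
* `‖F'(x_{k+1})‖ ≤ ‖G‖ ≤ ‖F'(x_k)‖`, by co-coercivity of `f'` and monotonicity of `∂h`;
* `F(x_{k+1}) + ‖F'(x_{k+1})‖² / L ≤ F(x_k)`;
* `2L (F(x_{k+1}) - F(z)) + ‖F'(x_{k+1})‖² ≤ L² (‖x_k - z‖² - ‖x_{k+1} - z‖²)` for every `z`.

The potential drop `φ_k - φ_{k+1}` is the sum of the slacks of these inequalities weighted by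
`b_k`, `d_k` and `1`, the last one taken at `z = x⋆`. The inequalities on `f` all come from the
interpolation inequality `f(x) + ⟪f'(x), y - x⟫ + ‖f'(y) - f'(x)‖² / (2L) ≤ f(y)` for
convex `L`-smooth `f`.
-/

open RealInnerProductSpace

variable {E : Type*} [NormedAddCommGroup E] [InnerProductSpace ℝ E]

theorem inner_sub_sub_nonneg_of_subgradient {h : E → ℝ} {x x' s s' : E}
    (hs : ∀ y, h y ≥ h x + ⟪s, y - x⟫) (hs' : ∀ y, h y ≥ h x' + ⟪s', y - x'⟫) :
    0 ≤ ⟪s - s', x - x'⟫ := by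
  have h₁ := hs x'
  have h₂ := hs' x
  rw [← neg_sub x x', inner_neg_right] at h₁
  rw [inner_sub_left]
  linarith

theorem norm_add_sq_le_of_subgradient {h : E → ℝ} {L : ℝ} {x x' s s' : E} (g : E) (hL : 0 ≤ L)
    (hs : ∀ y, h y ≥ h x + ⟪s, y - x⟫) (hs' : ∀ y, h y ≥ h x' + ⟪s', y - x'⟫)
    (hstep : L • (x - x') = g + s') :
    ‖g + s'‖ ^ 2 ≤ ‖g + s‖ ^ 2 := by
  have hmono : 0 ≤ ⟪g + s', s - s'⟫ := by
    rw [← hstep, real_inner_smul_left, real_inner_comm]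
    exact mul_nonneg hL (inner_sub_sub_nonneg_of_subgradient hs hs')
  rw [show g + s = (g + s') + (s - s') by abel, norm_add_sq_real (g + s')]
  linarith [sq_nonneg ‖s - s'‖]

variable [CompleteSpace E]

theorem HasGradientAt.hasDerivAt_add_smul {f : E → ℝ} {g x v : E} {t : ℝ}
    (hf : HasGradientAt f g (x + t • v)) :
    HasDerivAt (fun s : ℝ => f (x + s • v)) ⟪g, v⟫ t := by
  have hline : HasDerivAt (fun s : ℝ => x + s • v) v t := by
    simpa using ((hasDerivAt_id t).smul_const v).const_add x
  exact (hasGradientAt_iff_hasFDerivAt.mp hf).comp_hasDerivAt t hline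

theorem ConvexOn.add_inner_le_of_hasGradientAt {s : Set E} {f : E → ℝ} {g x y : E}
    (hf : ConvexOn ℝ s f) (hx : x ∈ s) (hy : y ∈ s) (hg : HasGradientAt f g x) :
    f x + ⟪g, y - x⟫ ≤ f y := by
  have hline : ConvexOn ℝ ((AffineMap.lineMap x y : ℝ →ᵃ[ℝ] E) ⁻¹' s)
      (fun t : ℝ => f (x + t • (y - x))) := by
    refine (hf.comp_affineMap (AffineMap.lineMap x y)).congr fun t _ => ?_
    simp [AffineMap.lineMap_apply_module', add_comm]
  have hslope := hline.le_slope_of_hasDerivAt (x := 0) (y := 1) (by simpa using hx)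
    (by simpa using hy) one_pos
    (HasGradientAt.hasDerivAt_add_smul (t := 0) (v := y - x) (by simpa using hg))
  simp only [slope_def_field, one_smul, add_sub_cancel, zero_smul, add_zero, sub_zero, div_one]
    at hslope
  linarith

theorem le_add_inner_add_of_lipschitz_gradient {f : E → ℝ} {f' : E → E} {L : ℝ}
    (hgrad : ∀ x, HasGradientAt f (f' x) x) (hsmooth : ∀ x y, ‖f' x - f' y‖ ≤ L * ‖x - y‖)
    (x y : E) :
    f y ≤ f x + ⟪f' x, y - x⟫ + L / 2 * ‖y - x‖ ^ 2 := by
  set v := y - x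
  have hψ : ∀ t : ℝ, HasDerivAt (fun t => f (x + t • v) - f x - t * ⟪f' x, v⟫)
      (⟪f' (x + t • v), v⟫ - ⟪f' x, v⟫) t := fun t =>
    (((hgrad _).hasDerivAt_add_smul).sub_const _).sub
      (by simpa using (hasDerivAt_id t).mul_const _)
  have hB : ∀ t : ℝ, HasDerivAt (fun t => L / 2 * ‖v‖ ^ 2 * t ^ 2) (L * ‖v‖ ^ 2 * t) t :=
    fun t => ((hasDerivAt_pow 2 t).const_mul (L / 2 * ‖v‖ ^ 2)).congr_deriv (by norm_num; ring)
  have hbound : ∀ t ∈ Set.Ico (0 : ℝ) 1,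
      ⟪f' (x + t • v), v⟫ - ⟪f' x, v⟫ ≤ L * ‖v‖ ^ 2 * t := by
    intro t ht
    calc ⟪f' (x + t • v), v⟫ - ⟪f' x, v⟫ = ⟪f' (x + t • v) - f' x, v⟫ :=
          (inner_sub_left ..).symm
      _ ≤ ‖f' (x + t • v) - f' x‖ * ‖v‖ := real_inner_le_norm _ _
      _ ≤ L * ‖t • v‖ * ‖v‖ := by
        gcongr
        simpa using hsmooth (x + t • v) x
      _ = L * ‖v‖ ^ 2 * t := by rw [norm_smul, Real.norm_of_nonneg ht.1]; ring
  have hend := image_le_of_deriv_right_le_deriv_boundary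
    (fun t _ => (hψ t).continuousAt.continuousWithinAt) (fun t _ => (hψ t).hasDerivWithinAt)
    (by simp) (fun t _ => (hB t).continuousAt.continuousWithinAt)
    (fun t _ => (hB t).hasDerivWithinAt) hbound (Set.right_mem_Icc.mpr zero_le_one)
  simp only [one_smul, one_mul, one_pow, mul_one, v, add_sub_cancel] at hend
  linarith

theorem ConvexOn.add_inner_add_norm_sub_sq_div_le {f : E → ℝ} {f' : E → E} {L : ℝ}
    (hf : ConvexOn ℝ Set.univ f) (hgrad : ∀ x, HasGradientAt f (f' x) x)
    (hsmooth : ∀ x y, ‖f' x - f' y‖ ≤ L * ‖x - y‖) (hL : 0 < L) (x y : E) :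
    f x + ⟪f' x, y - x⟫ + ‖f' y - f' x‖ ^ 2 / (2 * L) ≤ f y := by
  set d := f' y - f' x
  -- `y - L⁻¹ • d` minimises the upper bound on `f - ⟪f' x, ·⟫` given by the descent lemma at `y`
  have hx := hf.add_inner_le_of_hasGradientAt (Set.mem_univ x)
    (Set.mem_univ (y - L⁻¹ • d)) (hgrad x)
  have hy := le_add_inner_add_of_lipschitz_gradient hgrad hsmooth y (y - L⁻¹ • d)
  rw [show y - L⁻¹ • d - x = (y - x) - L⁻¹ • d by abel, inner_sub_right,
    real_inner_smul_right] at hx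
  rw [show y - L⁻¹ • d - y = -(L⁻¹ • d) by abel, inner_neg_right, real_inner_smul_right,
    norm_neg, norm_smul, mul_pow, Real.norm_eq_abs, sq_abs] at hy
  have hd : ⟪f' y, d⟫ - ⟪f' x, d⟫ = ‖d‖ ^ 2 := by
    rw [← inner_sub_left, real_inner_self_eq_norm_sq]
  have hLL : L * L⁻¹ = 1 := mul_inv_cancel₀ hL.ne'
  linear_combination hx + hy - L⁻¹ * hd + (L⁻¹ * ‖d‖ ^ 2 / 2) * hLL

theorem ConvexOn.norm_sub_sq_le_mul_inner {f : E → ℝ} {f' : E → E} {L : ℝ}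
    (hf : ConvexOn ℝ Set.univ f) (hgrad : ∀ x, HasGradientAt f (f' x) x)
    (hsmooth : ∀ x y, ‖f' x - f' y‖ ≤ L * ‖x - y‖) (hL : 0 < L) (x y : E) :
    ‖f' y - f' x‖ ^ 2 ≤ L * ⟪f' y - f' x, y - x⟫ := by
  have hxy := hf.add_inner_add_norm_sub_sq_div_le hgrad hsmooth hL x y
  have hyx := hf.add_inner_add_norm_sub_sq_div_le hgrad hsmooth hL y x
  rw [norm_sub_rev, ← neg_sub y x, inner_neg_right] at hyx
  have hLL : L * L⁻¹ = 1 := mul_inv_cancel₀ hL.ne'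
  rw [inner_sub_left]
  linear_combination L * (hxy + hyx) - ‖f' y - f' x‖ ^ 2 * hLL

section ProxGradStep

variable {f h : E → ℝ} {f' : E → E} {L : ℝ} {x x' s' : E}

theorem norm_gradient_add_sq_le_of_step (hf : ConvexOn ℝ Set.univ f)
    (hgrad : ∀ x, HasGradientAt f (f' x) x) (hsmooth : ∀ x y, ‖f' x - f' y‖ ≤ L * ‖x - y‖)
    (hL : 0 < L) (hstep : L • (x - x') = f' x + s') :
    ‖f' x' + s'‖ ^ 2 ≤ ‖f' x + s'‖ ^ 2 := by
  have hco := hf.norm_sub_sq_le_mul_inner hgrad hsmooth hL x x'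
  have hinner : ⟪f' x + s', f' x' - f' x⟫ = -(L * ⟪f' x' - f' x, x' - x⟫) := by
    rw [← hstep, real_inner_smul_left, real_inner_comm, ← neg_sub x' x, inner_neg_right]
    ring
  rw [show f' x' + s' = (f' x + s') + (f' x' - f' x) by abel, norm_add_sq_real]
  linarith [sq_nonneg ‖f' x' - f' x‖]

theorem add_add_norm_sq_div_le_of_step (hf : ConvexOn ℝ Set.univ f)
    (hgrad : ∀ x, HasGradientAt f (f' x) x) (hsmooth : ∀ x y, ‖f' x - f' y‖ ≤ L * ‖x - y‖)
    (hL : 0 < L) (hs' : ∀ y, h y ≥ h x' + ⟪s', y - x'⟫) (hstep : L • (x - x') = f' x + s') :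
    f x' + h x' + ‖f' x' + s'‖ ^ 2 / L ≤ f x + h x := by
  have hint := hf.add_inner_add_norm_sub_sq_div_le hgrad hsmooth hL x' x
  have hsub := hs' x
  have hnorm := norm_gradient_add_sq_le_of_step hf hgrad hsmooth hL hstep
  have hinner : L * (⟪f' x', x - x'⟫ + ⟪s', x - x'⟫) = ⟪f' x' + s', f' x + s'⟫ := by
    rw [← hstep, inner_smul_right, inner_add_left]
  have hdiff : ‖f' x - f' x'‖ ^ 2
      = ‖f' x + s'‖ ^ 2 - 2 * ⟪f' x' + s', f' x + s'⟫ + ‖f' x' + s'‖ ^ 2 := by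
    rw [show f' x - f' x' = (f' x + s') - (f' x' + s') by abel, norm_sub_sq_real,
      real_inner_comm]
  have hLL : L * L⁻¹ = 1 := mul_inv_cancel₀ hL.ne'
  calc f x' + h x' + ‖f' x' + s'‖ ^ 2 / L
      = (L * (f x' + h x') + ‖f' x' + s'‖ ^ 2) / L := by field_simp
    _ ≤ L * (f x + h x) / L := by
      gcongr
      linear_combination L * (hint + hsub) - hinner - hdiff / 2 + hnorm / 2
        - ‖f' x - f' x'‖ ^ 2 / 2 * hLL
    _ = f x + h x := by field_simp

theorem two_mul_sub_add_norm_sq_le_of_step (hf : ConvexOn ℝ Set.univ f)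
    (hgrad : ∀ x, HasGradientAt f (f' x) x) (hsmooth : ∀ x y, ‖f' x - f' y‖ ≤ L * ‖x - y‖)
    (hL : 0 < L) (hs' : ∀ y, h y ≥ h x' + ⟪s', y - x'⟫) (hstep : L • (x - x') = f' x + s')
    (z : E) :
    2 * L * (f x' + h x' - (f z + h z)) + ‖f' x' + s'‖ ^ 2 + L ^ 2 * ‖x' - z‖ ^ 2
      ≤ L ^ 2 * ‖x - z‖ ^ 2 := by
  have hint := hf.add_inner_add_norm_sub_sq_div_le hgrad hsmooth hL x' x
  have hcvx := hf.add_inner_le_of_hasGradientAt (Set.mem_univ x) (Set.mem_univ z) (hgrad x)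
  have hsub := hs' z
  rw [show z - x = -((x' - z) + (x - x')) by abel, inner_neg_right, inner_add_right] at hcvx
  rw [show z - x' = -(x' - z) by abel, inner_neg_right] at hsub
  have hinner' : L * ⟪f' x', x - x'⟫ = ⟪f' x', f' x + s'⟫ := by rw [← hstep, inner_smul_right]
  have hinner : L * ⟪f' x, x - x'⟫ = ⟪f' x, f' x + s'⟫ := by rw [← hstep, inner_smul_right]
  have hdist : L ^ 2 * ‖x - z‖ ^ 2
      = ‖f' x + s'‖ ^ 2 + 2 * L * (⟪f' x, x' - z⟫ + ⟪s', x' - z⟫) + L ^ 2 * ‖x' - z‖ ^ 2 := by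
    rw [← sq_abs L, ← Real.norm_eq_abs, ← mul_pow, ← norm_smul, ← mul_pow, ← norm_smul,
      show L • (x - z) = (f' x + s') + L • (x' - z) by rw [← hstep, ← smul_add]; abel_nf,
      norm_add_sq_real, inner_smul_right, inner_add_left]
    ring
  have hnorm : ‖f' x' + s'‖ ^ 2 = ‖f' x + s'‖ ^ 2
      - 2 * (⟪f' x, f' x + s'⟫ - ⟪f' x', f' x + s'⟫) + ‖f' x - f' x'‖ ^ 2 := by
    rw [show f' x' + s' = (f' x + s') - (f' x - f' x') by abel, norm_sub_sq_real,
      real_inner_comm, inner_sub_left]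
  have hLL : L * L⁻¹ = 1 := mul_inv_cancel₀ hL.ne'
  linear_combination 2 * L * (hint + hcvx + hsub) - 2 * hinner' + 2 * hinner - hdist + hnorm
    - ‖f' x - f' x'‖ ^ 2 * hLL

end ProxGradStep

theorem prox_grad_potential_decrease_general {d : ℕ} (L : ℝ) (hL : 0 < L)
    (f h : EuclideanSpace ℝ (Fin d) → ℝ)
    (f' : EuclideanSpace ℝ (Fin d) → EuclideanSpace ℝ (Fin d))
    (hgrad : ∀ x, HasGradientAt f (f' x) x)
    (hfconv : ConvexOn ℝ Set.univ f)
    (hsmooth : ∀ x y, ‖f' x - f' y‖ ≤ L * ‖x - y‖)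
    (xstar : EuclideanSpace ℝ (Fin d))
    (bk dk : ℝ) (hbk : 0 ≤ bk) (hdk : 0 ≤ dk)
    (xk xk1 sk sk1 : EuclideanSpace ℝ (Fin d))
    -- sk is a subgradient of h at xk (so f' xk + sk ∈ ∂F(xk))
    (hsk : ∀ y, h y ≥ h xk + (inner ℝ sk (y - xk) : ℝ))
    -- sk1 is the subgradient of h at xk1 implicitly defined by the prox step
    (hsk1 : ∀ y, h y ≥ h xk1 + (inner ℝ sk1 (y - xk1) : ℝ))
    (hstep : xk1 = xk - (1 / L) • (f' xk + sk1)) :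
    (dk + 2 * L) * ((f xk1 + h xk1) - (f xstar + h xstar))
        + (bk + 1 + dk / L) * ‖f' xk1 + sk1‖ ^ 2 + L ^ 2 * ‖xk1 - xstar‖ ^ 2
      ≤ dk * ((f xk + h xk) - (f xstar + h xstar))
        + bk * ‖f' xk + sk‖ ^ 2 + L ^ 2 * ‖xk - xstar‖ ^ 2 := by
  have hG : L • (xk - xk1) = f' xk + sk1 := by
    rw [hstep, sub_sub_cancel, smul_smul, mul_one_div_cancel hL.ne', one_smul]
  have hnorm : ‖f' xk1 + sk1‖ ^ 2 ≤ ‖f' xk + sk‖ ^ 2 :=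
    (norm_gradient_add_sq_le_of_step hfconv hgrad hsmooth hL hG).trans
      (norm_add_sq_le_of_subgradient (f' xk) hL.le hsk hsk1 hG)
  have hdecrease := add_add_norm_sq_div_le_of_step hfconv hgrad hsmooth hL hsk1 hG
  have hdist := two_mul_sub_add_norm_sq_le_of_step hfconv hgrad hsmooth hL hsk1 hG xstar
  linear_combination dk * hdecrease + bk * hnorm + hdist

/-- Potential decrease for the proximal gradient method. -/
theorem prox_grad_potential_decrease {d : ℕ} (L : ℝ) (hL : 0 < L)
    (f h : EuclideanSpace ℝ (Fin d) → ℝ)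
    (f' : EuclideanSpace ℝ (Fin d) → EuclideanSpace ℝ (Fin d))
    (hgrad : ∀ x, HasGradientAt f (f' x) x)
    (hfconv : ConvexOn ℝ Set.univ f)
    (hsmooth : ∀ x y, ‖f' x - f' y‖ ≤ L * ‖x - y‖)
    (hhconv : ConvexOn ℝ Set.univ h)
    (xstar : EuclideanSpace ℝ (Fin d))
    (hmin : ∀ y, f xstar + h xstar ≤ f y + h y)
    (bk dk : ℝ) (hbk : 0 ≤ bk) (hdk : 0 ≤ dk)
    (xk xk1 sk sk1 : EuclideanSpace ℝ (Fin d))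
    -- sk is a subgradient of h at xk (so f' xk + sk ∈ ∂F(xk))
    (hsk : ∀ y, h y ≥ h xk + (inner ℝ sk (y - xk) : ℝ))
    -- sk1 is the subgradient of h at xk1 implicitly defined by the prox step
    (hsk1 : ∀ y, h y ≥ h xk1 + (inner ℝ sk1 (y - xk1) : ℝ))
    (hstep : xk1 = xk - (1 / L) • (f' xk + sk1)) :
    (dk + 2 * L) * ((f xk1 + h xk1) - (f xstar + h xstar))
        + (bk + 1 + dk / L) * ‖f' xk1 + sk1‖ ^ 2 + L ^ 2 * ‖xk1 - xstar‖ ^ 2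
      ≤ dk * ((f xk + h xk) - (f xstar + h xstar))
        + bk * ‖f' xk + sk‖ ^ 2 + L ^ 2 * ‖xk - xstar‖ ^ 2 :=
  prox_grad_potential_decrease_general L hL f h f' hgrad hfconv hsmooth xstar bk dk hbk hdk xk xk1
    sk sk1 hsk hsk1 hstep
end

section
/- Let f = E_i f_i with each f_i convex L-smooth, and suppose the variance at the minimizer is bounded: E_i‖f_i'(x⋆)‖² ≤ σ⋆². For the primal averaging scheme y_{k+1} = (d_k/(d_k + δ_k L)) y_k + (δ_k L/(d_k + δ_k L)) x_k, x_{k+1} = x_k - δ_k f'_{i_k}(y_{k+1}), with 0 ≤ δ_k < 1/L, d_{k+1} ≤ d_k + δ_k L, and e_k = δ_k² L/(2(1 - δ_k L)), one has d_{k+1}(f(y_{k+1}) - f⋆) + (L/2) E_{i_k}‖x_{k+1} - x⋆‖² ≤ d_k (f(y_k) - f⋆) + (L/2)‖x_k - x⋆‖² + e_k σ⋆². -/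
/-! For one sample, expand `‖x₁ - x⋆‖²` and split `δL ⟪fᵢ'(y₁), xₖ - x⋆⟫` along the averaging
identity `(dₖ + δL) y₁ = dₖ yₖ + δL xₖ`. The inner product against `y₁ - yₖ` is controlled by
convexity; the one against `y₁ - x⋆` by co-coercivity of `fᵢ`, whose surplus
`δ/2 ‖fᵢ'(y₁) - fᵢ'(x⋆)‖²` absorbs the step term `δ²L/2 ‖fᵢ'(y₁)‖²` up to `e ‖fᵢ'(x⋆)‖²` by Young's
inequality with weights `δL` and `1 - δL`. Averaging over the samples and using
`dₖ₊₁ ≤ dₖ + δL`, `f(y₁) ≥ f(x⋆)` gives the potential inequality. -/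

open Set RealInnerProductSpace Finset
open scoped BigOperators

theorem mul_sq_norm_add_le {F : Type*} [SeminormedAddCommGroup F] {t : ℝ} (ht0 : 0 ≤ t)
    (ht1 : t < 1) (u v : F) : t * ‖u + v‖ ^ 2 ≤ ‖u‖ ^ 2 + t / (1 - t) * ‖v‖ ^ 2 := by
  have h1t : 0 < 1 - t := by linarith
  have hsq : t * (‖u‖ + ‖v‖) ^ 2 ≤ ‖u‖ ^ 2 + t / (1 - t) * ‖v‖ ^ 2 := by
    rw [div_mul_eq_mul_div, ← sub_nonneg]
    have : ‖u‖ ^ 2 + t * ‖v‖ ^ 2 / (1 - t) - t * (‖u‖ + ‖v‖) ^ 2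
        = ((1 - t) * ‖u‖ - t * ‖v‖) ^ 2 / (1 - t) := by
      field_simp
      ring
    rw [this]
    positivity
  calc t * ‖u + v‖ ^ 2 ≤ t * (‖u‖ + ‖v‖) ^ 2 := by gcongr; exact norm_add_le u v
    _ ≤ _ := hsq

theorem add_smul_eq_of_eq_div_add_smul {F : Type*} [AddCommGroup F] [Module ℝ F] {a b : ℝ}
    (ha : 0 ≤ a) (hb : 0 ≤ b) {u v y : F} (hy : y = (a / (a + b)) • u + (b / (a + b)) • v) :
    (a + b) • y = a • u + b • v := by
  rcases (add_nonneg ha hb).eq_or_lt with hab | hab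
  · obtain ⟨rfl, rfl⟩ : a = 0 ∧ b = 0 := ⟨by linarith, by linarith⟩
    simp
  · rw [hy, smul_add, smul_smul, smul_smul, mul_div_cancel₀ _ hab.ne', mul_div_cancel₀ _ hab.ne']

section FirstOrder

variable {E : Type*} [NormedAddCommGroup E] [InnerProductSpace ℝ E] [CompleteSpace E]
  {φ : E → ℝ}

theorem HasGradientAt.hasDerivAt_comp_add_smul {g x v : E} {t : ℝ}
    (hg : HasGradientAt φ g (x + t • v)) :
    HasDerivAt (fun s : ℝ => φ (x + s • v)) ⟪g, v⟫ t := by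
  have hline : HasDerivAt (fun s : ℝ => x + s • v) v t := by
    simpa using ((hasDerivAt_id t).smul_const v).const_add x
  simpa [InnerProductSpace.toDual_apply_apply, Function.comp_def] using
    hg.hasFDerivAt.comp_hasDerivAt t hline

theorem ConvexOn.add_inner_gradient_le {g x : E} (hφ : ConvexOn ℝ univ φ)
    (hg : HasGradientAt φ g x) (y : E) : φ x + ⟪g, y - x⟫ ≤ φ y := by
  have hline : ConvexOn ℝ univ (fun s : ℝ => φ (x + s • (y - x))) := by
    simpa only [preimage_univ, Function.comp_def, AffineMap.lineMap_apply, vsub_eq_sub,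
      vadd_eq_add, add_comm] using hφ.comp_affineMap (AffineMap.lineMap x y)
  have hslope := hline.le_slope_of_hasDerivAt (mem_univ 0) (mem_univ 1) one_pos
    (HasGradientAt.hasDerivAt_comp_add_smul (t := 0) (by simpa using hg))
  simp only [slope_def_field, one_smul, add_sub_cancel, zero_smul, add_zero, sub_zero,
    div_one] at hslope
  linarith

theorem le_add_inner_add_half_mul_sq_of_lipschitz_gradient {g : E → E} {L : ℝ}
    (hg : ∀ x, HasGradientAt φ (g x) x) (hlip : ∀ a b, ‖g a - g b‖ ≤ L * ‖a - b‖) (x y : E) :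
    φ y ≤ φ x + ⟪g x, y - x⟫ + L / 2 * ‖y - x‖ ^ 2 := by
  set v := y - x
  let ψ : ℝ → ℝ := fun t => φ (x + t • v) - t * ⟪g x, v⟫ - L / 2 * ‖v‖ ^ 2 * t ^ 2
  have hψ : ∀ t, HasDerivAt ψ (⟪g (x + t • v) - g x, v⟫ - L * ‖v‖ ^ 2 * t) t := by
    intro t
    have := (((hg (x + t • v)).hasDerivAt_comp_add_smul).sub
      ((hasDerivAt_id t).mul_const ⟪g x, v⟫)).sub ((hasDerivAt_pow 2 t).const_mul (L / 2 * ‖v‖ ^ 2))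
    exact this.congr_deriv (by rw [inner_sub_left]; ring)
  have hψ' : ∀ t ∈ interior (Icc (0 : ℝ) 1), ⟪g (x + t • v) - g x, v⟫ - L * ‖v‖ ^ 2 * t ≤ 0 := by
    intro t ht
    rw [interior_Icc] at ht
    have hgrowth : ‖g (x + t • v) - g x‖ ≤ L * t * ‖v‖ := by
      simpa [norm_smul, abs_of_pos ht.1, mul_assoc] using hlip (x + t • v) x
    refine sub_nonpos.2 ?_
    calc ⟪g (x + t • v) - g x, v⟫ ≤ ‖g (x + t • v) - g x‖ * ‖v‖ := real_inner_le_norm _ _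
      _ ≤ L * t * ‖v‖ * ‖v‖ := by gcongr
      _ = L * ‖v‖ ^ 2 * t := by ring
  have hanti : AntitoneOn ψ (Icc 0 1) :=
    antitoneOn_of_hasDerivWithinAt_nonpos (convex_Icc 0 1)
      (HasDerivAt.continuousOn fun t _ => hψ t) (fun t _ => (hψ t).hasDerivWithinAt) hψ'
  have h01 : ψ 1 ≤ ψ 0 :=
    hanti (left_mem_Icc.2 zero_le_one) (right_mem_Icc.2 zero_le_one) zero_le_one
  have hψ1 : ψ 1 = φ y - ⟪g x, v⟫ - L / 2 * ‖v‖ ^ 2 := by simp [ψ, v]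
  have hψ0 : ψ 0 = φ x := by simp [ψ]
  linarith

theorem ConvexOn.sq_norm_gradient_sub_le {g : E → E} {L : ℝ} (hφ : ConvexOn ℝ univ φ)
    (hg : ∀ x, HasGradientAt φ (g x) x) (hL : 0 < L)
    (hlip : ∀ a b, ‖g a - g b‖ ≤ L * ‖a - b‖) (x y : E) :
    ‖g y - g x‖ ^ 2 ≤ 2 * L * (φ y - φ x - ⟪g x, y - x⟫) := by
  set w := g y - g x
  -- the point reached by a gradient step of length `1/L` from `y` for `φ - ⟪g x, ·⟫`
  set z := y - L⁻¹ • w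
  have hupper := le_add_inner_add_half_mul_sq_of_lipschitz_gradient hg hlip y z
  have hlower := hφ.add_inner_gradient_le (hg x) z
  have hzy : z - y = -(L⁻¹ • w) := by simp [z]
  have hzx : z - x = (y - x) - L⁻¹ • w := by simp only [z]; abel
  rw [hzy, inner_neg_right, real_inner_smul_right, norm_neg, norm_smul, Real.norm_eq_abs,
    abs_of_pos (inv_pos.2 hL)] at hupper
  rw [hzx, inner_sub_right, real_inner_smul_right] at hlower
  have hw : ⟪g y, w⟫ - ⟪g x, w⟫ = ‖w‖ ^ 2 := by
    rw [← inner_sub_left, real_inner_self_eq_norm_sq]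
  have : ‖w‖ ^ 2 / (2 * L) ≤ φ y - φ x - ⟪g x, y - x⟫ := by
    field_simp at hupper hlower ⊢
    nlinarith
  rwa [div_le_iff₀ (by positivity), mul_comm] at this

theorem ConvexOn.primal_averaging_step {g : E → E} {L δ dk : ℝ} (hφ : ConvexOn ℝ univ φ)
    (hg : ∀ x, HasGradientAt φ (g x) x) (hL : 0 < L) (hlip : ∀ a b, ‖g a - g b‖ ≤ L * ‖a - b‖)
    (hδ0 : 0 ≤ δ) (hδL : δ * L < 1) (hdk : 0 ≤ dk) {xk yk y₁ : E}
    (hy : (dk + δ * L) • y₁ = dk • yk + (δ * L) • xk) (xstar : E) :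
    L / 2 * ‖xk - δ • g y₁ - xstar‖ ^ 2 + (dk + δ * L) * (φ y₁ - φ xstar)
      ≤ L / 2 * ‖xk - xstar‖ ^ 2 + dk * (φ yk - φ xstar)
        + δ ^ 2 * L / (2 * (1 - δ * L)) * ‖g xstar‖ ^ 2 := by
  have hexpand : ‖xk - δ • g y₁ - xstar‖ ^ 2
      = ‖xk - xstar‖ ^ 2 - 2 * δ * ⟪g y₁, xk - xstar⟫ + δ ^ 2 * ‖g y₁‖ ^ 2 := by
    rw [sub_right_comm, norm_sub_sq_real, real_inner_smul_right, norm_smul, Real.norm_eq_abs,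
      abs_of_nonneg hδ0, real_inner_comm]
    ring
  have hsplit : δ * L * ⟪g y₁, xk - xstar⟫
      = δ * L * ⟪g y₁, y₁ - xstar⟫ + dk * ⟪g y₁, y₁ - yk⟫ := by
    have h := congrArg (⟪g y₁, ·⟫) hy
    simp only [inner_add_right, real_inner_smul_right] at h
    simp only [inner_sub_right]
    linear_combination -h
  have hcoco := hφ.sq_norm_gradient_sub_le hg hL hlip y₁ xstar
  have hconv := hφ.add_inner_gradient_le (hg y₁) yk
  have hyoung := mul_sq_norm_add_le (mul_nonneg hδ0 hL.le) hδL (g y₁ - g xstar) (g xstar)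
  rw [sub_add_cancel, norm_sub_rev] at hyoung
  rw [show xstar - y₁ = -(y₁ - xstar) by abel, inner_neg_right] at hcoco
  rw [show yk - y₁ = -(y₁ - yk) by abel, inner_neg_right] at hconv
  have hcoef : δ / 2 * (δ * L / (1 - δ * L)) = δ ^ 2 * L / (2 * (1 - δ * L)) := by
    rw [div_mul_div_comm]; ring
  linear_combination L / 2 * hexpand - hsplit + δ / 2 * hcoco + dk * hconv + δ / 2 * hyoung
    + ‖g xstar‖ ^ 2 * hcoef

end FirstOrder

/-- One-step potential inequality for primal-averaging SGD on a finite sum with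
bounded variance at the optimum. -/
theorem var_at_opt_primal_averaging_potential {d n : ℕ} (hn : 0 < n)
    (L σstar : ℝ) (hL : 0 < L)
    (fi : Fin n → EuclideanSpace ℝ (Fin d) → ℝ)
    (fi' : Fin n → EuclideanSpace ℝ (Fin d) → EuclideanSpace ℝ (Fin d))
    (hgrad : ∀ i x, HasGradientAt (fi i) (fi' i x) x)
    (hconv : ∀ i, ConvexOn ℝ Set.univ (fi i))
    (hsmooth : ∀ i x y, ‖fi' i x - fi' i y‖ ≤ L * ‖x - y‖)
    (f : EuclideanSpace ℝ (Fin d) → ℝ)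
    (hf : ∀ x, f x = (n : ℝ)⁻¹ * ∑ i, fi i x)
    (xstar : EuclideanSpace ℝ (Fin d)) (hmin : ∀ y, f xstar ≤ f y)
    (hvar : (n : ℝ)⁻¹ * (∑ i, ‖fi' i xstar‖ ^ 2) ≤ σstar ^ 2)
    (δ dk d1 : ℝ) (hδ0 : 0 ≤ δ) (hδ1 : δ < 1 / L) (hdk : 0 ≤ dk)
    (hd1 : d1 ≤ dk + δ * L)
    (xk yk y1 : EuclideanSpace ℝ (Fin d))
    (hy1 : y1 = (dk / (dk + δ * L)) • yk + (δ * L / (dk + δ * L)) • xk)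
    (x1 : Fin n → EuclideanSpace ℝ (Fin d))
    (hx1 : ∀ i, x1 i = xk - δ • fi' i y1) :
    d1 * (f y1 - f xstar)
        + L / 2 * ((n : ℝ)⁻¹ * ∑ i, ‖x1 i - xstar‖ ^ 2)
      ≤ dk * (f yk - f xstar) + L / 2 * ‖xk - xstar‖ ^ 2
        + (δ ^ 2 * L / (2 * (1 - δ * L))) * σstar ^ 2 := by
  have hδL : δ * L < 1 := by rwa [lt_div_iff₀ hL] at hδ1
  have hy : (dk + δ * L) • y1 = dk • yk + (δ * L) • xk :=
    add_smul_eq_of_eq_div_add_smul hdk (mul_nonneg hδ0 hL.le) hy1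
  have hstep i :=
    (hconv i).primal_averaging_step (hgrad i) hL (hsmooth i) hδ0 hδL hdk hy xstar
  have : Nonempty (Fin n) := ⟨⟨0, hn⟩⟩
  have hE (a : Fin n → ℝ) : (n : ℝ)⁻¹ * ∑ i, a i = 𝔼 i, a i := by
    rw [Fintype.expect_eq_sum_div_card, Fintype.card_fin, inv_mul_eq_div]
  simp only [hE] at hf hvar ⊢
  have havg := expect_le_expect (s := univ) fun i _ => hstep i
  simp only [expect_add_distrib, expect_sub_distrib, ← mul_expect, Fintype.expect_const,
    ← hf] at havg
  simp only [hx1]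
  have he : 0 ≤ δ ^ 2 * L / (2 * (1 - δ * L)) := by
    have : 0 < 1 - δ * L := by linarith
    positivity
  have hgap : 0 ≤ f y1 - f xstar := sub_nonneg.2 (hmin y1)
  linear_combination havg + (f y1 - f xstar) * hd1 + δ ^ 2 * L / (2 * (1 - δ * L)) * hvar
end
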